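/- arXiv:2108.00060 — 5 statements merged into one kernel-verified Lean document; each statement's English description precedes it below -/
import Mathlib

section
/- Let ℕ^ℤ_f denote finitely supported functions ℤ → ℕ and π(α,β) := ∑_{j∈ℤ} j(α_j − β_j). Given (α,β) ∈ ℕ^ℤ_f × ℕ^ℤ_f with π(α,β) = 0, there are only finitely many triples consisting of pairs (α¹,β¹), (α²,β²) ∈ ℕ^ℤ_f × ℕ^ℤ_f with π(α¹,β¹) = 0 and π(α²,β²) = 0 and an index j ∈ ℤ such that (i) α = α¹ + α² − e_j and β = β¹ + β² − e_j, and (ii) α¹_j β²_j + α²_j β¹_j ≠ 0. -/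
/-!
Condition (ii) makes the truncated subtractions in (i) exact: `α¹ + α² = α + e_j` and
`β¹ + β² = β + e_j`. If `α¹_j β²_j ≠ 0`, then `β²` absorbs the `e_j` in the second sum, so
`β¹ ≤ β`, while `α¹ = e_j + α'` with `α' ≤ α`. Zero momentum of `(α¹, β¹)` then reads
`j = π(β¹) - π(α')`, so `j` ranges over a finite set determined by `(α, β)` (the case
`α²_j β¹_j ≠ 0` is symmetric). For each such `j`, all four families are bounded by `α + e_j`
or `β + e_j`.
-/

open scoped BigOperators ENNReal

/-- The index set `ℕ^ℤ_f`: finitely supported functions `ℤ → ℕ`. -/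
abbrev Idx : Type := ℤ →₀ ℕ

/-- Coefficient families of formal Hamiltonians. -/
abbrev Coeffs : Type := Idx → Idx → ℂ

/-- `|α| = ∑_j α_j`. -/
def wt (α : Idx) : ℕ := α.sum fun _ n => n

/-- The momentum `π(α,β) = ∑_j j (α_j - β_j)`. -/
def mom (α β : Idx) : ℤ := (α.sum fun j n => j * (n : ℤ)) - (β.sum fun j n => j * (n : ℤ))

open Finsupp

theorem Finsupp.single_one_le_iff {ι : Type*} {f : ι →₀ ℕ} {i : ι} : single i 1 ≤ f ↔ f i ≠ 0 :=
  single_le_iff.trans Nat.one_le_iff_ne_zero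

theorem Finsupp.eq_add_single_one_of_eq_tsub {ι : Type*} {f g : ι →₀ ℕ} {i : ι} (hg : g i ≠ 0)
    (h : f = g - single i 1) : g = f + single i 1 :=
  ((eq_tsub_iff_add_eq_of_le (single_one_le_iff.2 hg)).1 h).symm

def totalMomentum (γ : Idx) : ℤ := γ.sum fun j n => j * (n : ℤ)

theorem mom_eq_sub (α β : Idx) : mom α β = totalMomentum α - totalMomentum β := rfl

theorem totalMomentum_add (γ δ : Idx) :
    totalMomentum (γ + δ) = totalMomentum γ + totalMomentum δ :=
  sum_add_index' (by simp) fun _ _ _ => by push_cast; ring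

theorem totalMomentum_single (j : ℤ) (n : ℕ) : totalMomentum (single j n) = j * n :=
  sum_single_index (by simp)

noncomputable def bracketIndices (α β : Idx) : Finset ℤ :=
  (Finset.Iic α ×ˢ Finset.Iic β).image fun p => totalMomentum p.2 - totalMomentum p.1

theorem mem_bracketIndices {α β a₁ a₂ b₁ b₂ : Idx} {j : ℤ}
    (ha : a₁ + a₂ = α + single j 1) (hb : b₁ + b₂ = β + single j 1)
    (ha₁ : a₁ j ≠ 0) (hb₂ : b₂ j ≠ 0) (hmom : mom a₁ b₁ = 0) : j ∈ bracketIndices α β := by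
  obtain ⟨a, rfl⟩ : ∃ a, a₁ = single j 1 + a := exists_add_of_le (single_one_le_iff.2 ha₁)
  have haα : a ≤ α := by
    rw [add_assoc, add_comm] at ha
    exact le_self_add.trans_eq (add_right_cancel ha)
  have hbβ : b₁ ≤ β :=
    le_of_add_le_add_right <| (add_le_add le_rfl (single_one_le_iff.2 hb₂)).trans_eq hb
  refine Finset.mem_image.2
    ⟨(a, b₁), Finset.mem_product.2 ⟨Finset.mem_Iic.2 haα, Finset.mem_Iic.2 hbβ⟩, ?_⟩
  rw [mom_eq_sub, totalMomentum_add, totalMomentum_single] at hmom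
  push_cast at hmom
  linarith

theorem finitely_many_bracket_triples_general (α β : Idx) :
    {x : ((Idx × Idx) × (Idx × Idx)) × ℤ |
        mom x.1.1.1 x.1.1.2 = 0 ∧ mom x.1.2.1 x.1.2.2 = 0 ∧
        α = x.1.1.1 + x.1.2.1 - Finsupp.single x.2 1 ∧
        β = x.1.1.2 + x.1.2.2 - Finsupp.single x.2 1 ∧
        x.1.1.1 x.2 * x.1.2.2 x.2 + x.1.2.1 x.2 * x.1.1.2 x.2 ≠ 0}.Finite := by
  refine ((bracketIndices α β).finite_toSet.biUnion fun j _ =>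
    let boxα := Set.finite_Iic (α + single j 1)
    let boxβ := Set.finite_Iic (β + single j 1)
    ((boxα.prod boxβ).prod (boxα.prod boxβ)).prod (Set.finite_singleton j)).subset ?_
  rintro ⟨⟨⟨a₁, b₁⟩, a₂, b₂⟩, j⟩ ⟨h₁, h₂, hα, hβ, hne⟩
  dsimp only at h₁ h₂ hα hβ hne
  have hcases : (a₁ j ≠ 0 ∧ b₂ j ≠ 0) ∨ (a₂ j ≠ 0 ∧ b₁ j ≠ 0) := by
    simp only [ne_eq, ← not_or, ← Nat.mul_eq_zero]
    omega
  have ha : a₁ + a₂ = α + single j 1 :=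
    eq_add_single_one_of_eq_tsub (by rw [Finsupp.add_apply]; omega) hα
  have hb : b₁ + b₂ = β + single j 1 :=
    eq_add_single_one_of_eq_tsub (by rw [Finsupp.add_apply]; omega) hβ
  have hj : j ∈ bracketIndices α β := by
    rcases hcases with ⟨ha₁, hb₂⟩ | ⟨ha₂, hb₁⟩
    · exact mem_bracketIndices ha hb ha₁ hb₂ h₁
    · exact mem_bracketIndices (add_comm a₁ a₂ ▸ ha) (add_comm b₁ b₂ ▸ hb) ha₂ hb₁ h₂
  exact Set.mem_biUnion (Finset.mem_coe.2 hj)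
    ⟨⟨⟨le_self_add.trans_eq ha, le_self_add.trans_eq hb⟩,
      le_add_self.trans_eq ha, le_add_self.trans_eq hb⟩, rfl⟩

/-- Lemma 2 of the finiteness lemma: given `(α,β)` of zero
momentum, there are only finitely many triples `((α¹,β¹),(α²,β²),j)` of
zero-momentum pairs and an index `j` with `α = α¹+α²−e_j`, `β = β¹+β²−e_j`
and `α¹_j β²_j + α²_j β¹_j ≠ 0`. -/
theorem finitely_many_bracket_triples (α β : Idx) (h : mom α β = 0) :
    {x : ((Idx × Idx) × (Idx × Idx)) × ℤ |
        mom x.1.1.1 x.1.1.2 = 0 ∧ mom x.1.2.1 x.1.2.2 = 0 ∧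
        α = x.1.1.1 + x.1.2.1 - Finsupp.single x.2 1 ∧
        β = x.1.1.2 + x.1.2.2 - Finsupp.single x.2 1 ∧
        x.1.1.1 x.2 * x.1.2.2 x.2 + x.1.2.1 x.2 * x.1.1.2 x.2 ≠ 0}.Finite :=
  finitely_many_bracket_triples_general α β
end

section
/- For any two formal Hamiltonians F, G ∈ 𝓕, the Poisson bracket {F,G} is well defined: for each pair (α,β) ∈ ℕ^ℤ_f × ℕ^ℤ_f the defining double sum {F,G}_{α,β} = i ∑_{j∈ℤ} ∑ F_{α¹,β¹} G_{α²,β²} (α¹_j β²_j − β¹_j α²_j) — the inner sum running over all (α¹,β¹), (α²,β²) with π(α¹,β¹) = π(α²,β²) = 0, α = α¹+α²−e_j and β = β¹+β²−e_j — has only finitely many nonzero terms, and the resulting family {F,G} again belongs to 𝓕 (it vanishes on pairs of nonzero momentum and satisfies the reality condition). -/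
open scoped BigOperators ENNReal

/-- Membership in the space `𝓕` of formal Hamiltonians: vanishing of the
constant and linear coefficients, reality and momentum conservation. -/
def InF (H : Coeffs) : Prop :=
  H 0 0 = 0 ∧ H (Finsupp.single 0 1) 0 = 0 ∧ H 0 (Finsupp.single 0 1) = 0 ∧
    (∀ α β, H α β = (starRingEnd ℂ) (H β α)) ∧ (∀ α β, mom α β ≠ 0 → H α β = 0)

/-- A single term of the Poisson-bracket double sum `{F,G}_{α,β}`, indexed by
`x = (j, ((α¹,β¹), (α²,β²)))`: it is
`F_{α¹,β¹} G_{α²,β²} (α¹_j β²_j − β¹_j α²_j)` when `π(α¹,β¹) = π(α²,β²) = 0`,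
`α = α¹+α²−e_j` and `β = β¹+β²−e_j`, and `0` otherwise. -/
noncomputable def bracketTerm (F G : Coeffs) (α β : Idx)
    (x : ℤ × (Idx × Idx) × (Idx × Idx)) : ℂ :=
  if mom x.2.1.1 x.2.1.2 = 0 ∧ mom x.2.2.1 x.2.2.2 = 0 ∧
      α = x.2.1.1 + x.2.2.1 - Finsupp.single x.1 1 ∧
      β = x.2.1.2 + x.2.2.2 - Finsupp.single x.1 1 then
    F x.2.1.1 x.2.1.2 * G x.2.2.1 x.2.2.2 *
      ((x.2.1.1 x.1 : ℂ) * (x.2.2.2 x.1 : ℂ) - (x.2.1.2 x.1 : ℂ) * (x.2.2.1 x.1 : ℂ))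
  else 0

/-- The Poisson bracket `{F,G}`, defined coefficientwise by
`{F,G}_{α,β} = i ∑_x bracketTerm F G α β x` (a sum with finitely many
nonzero terms, so the `finsum` gives the intended value). -/
noncomputable def bracket (F G : Coeffs) : Coeffs := fun α β =>
  Complex.I * ∑ᶠ x : ℤ × (Idx × Idx) × (Idx × Idx), bracketTerm F G α β x

/-! A nonzero term of `{F,G}_{α,β}` at the index `j` comes from `(α¹,β¹)` and `(α²,β²)` whose
sum is `(α + e_j, β + e_j)`, and the factor `α¹_j β²_j − β¹_j α²_j` forces `e_j` to occur in one
of `α¹, β¹`. Removing it leaves a pair below `(α, β)` (or `(β, α)`) of momentum `±j`, so `j`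
ranges over a finite set, and then so do the four multi-indices. Momentum is additive, which
gives conservation. Since the coefficients of `F` and `G` vanish in total degree `≤ 1`,
`{F,G}_{α,β}` vanishes when `|α| + |β| ≤ 1`. Reality follows from the involution
`(α¹,β¹,α²,β²) ↦ (β¹,α¹,β²,α²)`, which turns each term into minus the conjugate of the
corresponding term of `{F,G}_{β,α}`. -/

open Finsupp ComplexConjugate

namespace Finsupp

variable {ι : Type*}

lemma exists_eq_single_of_degree_eq_one {d : ι →₀ ℕ} (h : degree d = 1) :
    ∃ i, d = single i 1 := by
  obtain ⟨i, hi⟩ : ∃ i, d i ≠ 0 := by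
    by_contra! hd
    simp [show d = 0 from Finsupp.ext hd] at h
  refine ⟨i, ?_⟩
  have hrest : degree (d - single i 1) = 0 := by
    have := congrArg degree (sub_add_single_one_cancel hi)
    rw [map_add, degree_single, h] at this
    omega
  rw [← sub_add_single_one_cancel hi, (degree_eq_zero_iff _).mp hrest, zero_add]

lemma sub_single_add_eq_of_add_eq_add_single {γ δ α : ι →₀ ℕ} {j : ι}
    (h : γ + δ = α + single j 1) (hγ : γ j ≠ 0) : γ - single j 1 + δ = α := by
  rw [← sub_add_single_one_cancel hγ, add_right_comm] at h
  exact add_right_cancel h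

lemma le_of_add_eq_add_single {γ δ α : ι →₀ ℕ} {j : ι}
    (h : γ + δ = α + single j 1) (hδ : δ j ≠ 0) : γ ≤ α := by
  rw [add_comm] at h
  rw [← sub_single_add_eq_of_add_eq_add_single h hδ]
  exact le_add_self

end Finsupp

lemma mom_eq_weight_sub (α β : Idx) : mom α β = weight id α - weight id β := by
  simp only [mom, weight_apply, id, nsmul_eq_mul, mul_comm]

lemma mom_add_add (α₁ β₁ α₂ β₂ : Idx) :
    mom (α₁ + α₂) (β₁ + β₂) = mom α₁ β₁ + mom α₂ β₂ := by
  simp only [mom_eq_weight_sub, map_add]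
  ring

lemma mom_add_single_add_single (α β : Idx) (j : ℤ) :
    mom (α + single j 1) (β + single j 1) = mom α β := by
  simp only [mom_eq_weight_sub, map_add]
  ring

lemma mom_add_single_left (α β : Idx) (j : ℤ) : mom (α + single j 1) β = mom α β + j := by
  simp only [mom_eq_weight_sub, map_add, weight_single, one_smul, id]
  ring

lemma mom_add_single_right (α β : Idx) (j : ℤ) : mom α (β + single j 1) = mom α β - j := by
  simp only [mom_eq_weight_sub, map_add, weight_single, one_smul, id]
  ring

lemma mom_swap (α β : Idx) : mom β α = -mom α β :=
  (neg_sub _ _).symm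

lemma mom_single_zero (j : ℤ) : mom (single j 1) 0 = j := by
  simp [mom_eq_weight_sub, weight_single]

namespace InF

variable {H : Coeffs}

lemma apply_single_zero (hH : InF H) (j : ℤ) : H (single j 1) 0 = 0 := by
  rcases eq_or_ne j 0 with rfl | hj
  · exact hH.2.1
  · exact hH.2.2.2.2 _ _ (by rwa [mom_single_zero])

lemma apply_zero_single (hH : InF H) (j : ℤ) : H 0 (single j 1) = 0 := by
  rw [hH.2.2.2.1, hH.apply_single_zero, map_zero]

lemma two_le_degree_add_degree (hH : InF H) {α β : Idx} (h : H α β ≠ 0) :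
    2 ≤ degree α + degree β := by
  by_contra! hlow
  rcases Nat.le_one_iff_eq_zero_or_eq_one.mp (Nat.lt_succ_iff.mp hlow) with h0 | h1
  · obtain ⟨rfl, rfl⟩ : α = 0 ∧ β = 0 := by
      simpa only [Nat.add_eq_zero_iff, degree_eq_zero_iff] using h0
    exact h hH.1
  · rcases Nat.add_eq_one_iff.mp h1 with ⟨hα, hβ⟩ | ⟨hα, hβ⟩
    · obtain ⟨j, rfl⟩ := exists_eq_single_of_degree_eq_one hβ
      rw [(degree_eq_zero_iff _).mp hα] at h
      exact h (hH.apply_zero_single j)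
    · obtain ⟨j, rfl⟩ := exists_eq_single_of_degree_eq_one hα
      rw [(degree_eq_zero_iff _).mp hβ] at h
      exact h (hH.apply_single_zero j)

end InF

lemma Nat.ne_zero_and_ne_zero_of_mul_ne_mul {a b c d : ℕ} (h : a * d ≠ b * c) :
    (a ≠ 0 ∧ d ≠ 0) ∨ (b ≠ 0 ∧ c ≠ 0) := by
  by_contra! h'
  exact h (by grind)

section Bracket

variable {F G : Coeffs} {α β : Idx}

lemma bracketTerm_ne_zero {j : ℤ} {α₁ β₁ α₂ β₂ : Idx}
    (h : bracketTerm F G α β (j, (α₁, β₁), (α₂, β₂)) ≠ 0) :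
    mom α₁ β₁ = 0 ∧ mom α₂ β₂ = 0 ∧ α₁ + α₂ = α + single j 1 ∧ β₁ + β₂ = β + single j 1 ∧
      F α₁ β₁ ≠ 0 ∧ G α₂ β₂ ≠ 0 ∧ ((α₁ j ≠ 0 ∧ β₂ j ≠ 0) ∨ (β₁ j ≠ 0 ∧ α₂ j ≠ 0)) := by
  rw [bracketTerm, ite_ne_right_iff] at h
  dsimp only at h
  obtain ⟨⟨hmom₁, hmom₂, hα, hβ⟩, h⟩ := h
  obtain ⟨⟨hF, hG⟩, hfactor⟩ := mul_ne_zero_iff.mp h |>.imp_left mul_ne_zero_iff.mp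
  have hj : (α₁ j ≠ 0 ∧ β₂ j ≠ 0) ∨ (β₁ j ≠ 0 ∧ α₂ j ≠ 0) :=
    Nat.ne_zero_and_ne_zero_of_mul_ne_mul fun he => hfactor (by rw [sub_eq_zero]; exact_mod_cast he)
  have hle : ∀ γ δ : Idx, γ j ≠ 0 ∨ δ j ≠ 0 → single j 1 ≤ γ + δ := fun γ δ hγδ =>
    single_le_iff.mpr (by rw [Finsupp.add_apply]; omega)
  refine ⟨hmom₁, hmom₂, ?_, ?_, hF, hG, hj⟩
  · exact (tsub_eq_iff_eq_add_of_le (hle α₁ α₂ (by tauto))).mp hα.symm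
  · exact (tsub_eq_iff_eq_add_of_le (hle β₁ β₂ (by tauto))).mp hβ.symm

lemma index_mem_of_bracketTerm_ne_zero {j : ℤ} {α₁ β₁ α₂ β₂ : Idx}
    (h : bracketTerm F G α β (j, (α₁, β₁), (α₂, β₂)) ≠ 0) :
    j ∈ Function.uncurry mom '' (Set.Iic α ×ˢ Set.Iic β) ∪
      Function.uncurry mom '' (Set.Iic β ×ˢ Set.Iic α) := by
  obtain ⟨hmom, -, hα, hβ, -, -, hj⟩ := bracketTerm_ne_zero h
  rcases hj with ⟨hα₁, hβ₂⟩ | ⟨hβ₁, hα₂⟩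
  · refine Or.inr ⟨(β₁, α₁ - single j 1), ⟨le_of_add_eq_add_single hβ hβ₂,
      (sub_single_add_eq_of_add_eq_add_single hα hα₁).symm ▸ le_self_add⟩, ?_⟩
    rw [← sub_add_single_one_cancel hα₁, mom_add_single_left] at hmom
    rw [Function.uncurry_apply_pair, mom_swap]
    linarith
  · refine Or.inl ⟨(α₁, β₁ - single j 1), ⟨le_of_add_eq_add_single hα hα₂,
      (sub_single_add_eq_of_add_eq_add_single hβ hβ₁).symm ▸ le_self_add⟩, ?_⟩
    rw [← sub_add_single_one_cancel hβ₁, mom_add_single_right] at hmom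
    simp only [Function.uncurry_apply_pair]
    linarith

lemma finite_support_bracketTerm (F G : Coeffs) (α β : Idx) :
    (Function.support (bracketTerm F G α β)).Finite := by
  let box : ℤ → Set ((Idx × Idx) × (Idx × Idx)) := fun j =>
    (Set.Iic (α + single j 1) ×ˢ Set.Iic (β + single j 1)) ×ˢ
      (Set.Iic (α + single j 1) ×ˢ Set.Iic (β + single j 1))
  have hbox : ∀ j, (box j).Finite := fun _ =>
    ((Set.finite_Iic _).prod (Set.finite_Iic _)).prod ((Set.finite_Iic _).prod (Set.finite_Iic _))
  have hindices : (Function.uncurry mom '' (Set.Iic α ×ˢ Set.Iic β) ∪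
      Function.uncurry mom '' (Set.Iic β ×ˢ Set.Iic α)).Finite :=
    (((Set.finite_Iic α).prod (Set.finite_Iic β)).image _).union
      (((Set.finite_Iic β).prod (Set.finite_Iic α)).image _)
  refine (hindices.biUnion fun j _ => (Set.finite_singleton j).prod (hbox j)).subset ?_
  rintro ⟨j, ⟨α₁, β₁⟩, α₂, β₂⟩ h
  obtain ⟨-, -, hα, hβ, -⟩ := bracketTerm_ne_zero h
  refine Set.mem_biUnion (index_mem_of_bracketTerm_ne_zero h) ⟨rfl, ?_⟩
  simp only [box, Set.mem_prod, Set.mem_Iic]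
  exact ⟨⟨hα ▸ le_self_add, hβ ▸ le_self_add⟩, ⟨hα ▸ le_add_self, hβ ▸ le_add_self⟩⟩

lemma bracket_eq_zero_of_forall_bracketTerm_eq_zero
    (h : ∀ x, bracketTerm F G α β x = 0) : bracket F G α β = 0 := by
  rw [bracket, finsum_congr h, finsum_zero, mul_zero]

lemma bracketTerm_eq_zero_of_mom_ne_zero (h : mom α β ≠ 0) (x : ℤ × (Idx × Idx) × (Idx × Idx)) :
    bracketTerm F G α β x = 0 := by
  obtain ⟨j, ⟨α₁, β₁⟩, α₂, β₂⟩ := x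
  by_contra hx
  obtain ⟨hmom₁, hmom₂, hα, hβ, -⟩ := bracketTerm_ne_zero hx
  apply h
  rw [← mom_add_single_add_single α β j, ← hα, ← hβ, mom_add_add, hmom₁, hmom₂, add_zero]

lemma bracketTerm_eq_zero_of_degree_le_one (hF : InF F) (hG : InF G)
    (h : degree α + degree β ≤ 1) (x : ℤ × (Idx × Idx) × (Idx × Idx)) :
    bracketTerm F G α β x = 0 := by
  obtain ⟨j, ⟨α₁, β₁⟩, α₂, β₂⟩ := x
  by_contra hx
  obtain ⟨-, -, hα, hβ, hFne, hGne, -⟩ := bracketTerm_ne_zero hx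
  have hdegα := congrArg degree hα
  have hdegβ := congrArg degree hβ
  simp only [map_add, degree_single] at hdegα hdegβ
  have := hF.two_le_degree_add_degree hFne
  have := hG.two_le_degree_add_degree hGne
  omega

def swapPairs : ℤ × (Idx × Idx) × (Idx × Idx) ≃ ℤ × (Idx × Idx) × (Idx × Idx) :=
  (Equiv.refl ℤ).prodCongr ((Equiv.prodComm Idx Idx).prodCongr (Equiv.prodComm Idx Idx))

lemma bracketTerm_swapPairs (hF : ∀ α β, F α β = conj (F β α))
    (hG : ∀ α β, G α β = conj (G β α)) (x : ℤ × (Idx × Idx) × (Idx × Idx)) :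
    bracketTerm F G α β (swapPairs x) = -conj (bracketTerm F G β α x) := by
  obtain ⟨j, ⟨α₁, β₁⟩, α₂, β₂⟩ := x
  have hcond : (mom β₁ α₁ = 0 ∧ mom β₂ α₂ = 0 ∧ α = β₁ + β₂ - single j 1 ∧
      β = α₁ + α₂ - single j 1) ↔ (mom α₁ β₁ = 0 ∧ mom α₂ β₂ = 0 ∧
      β = α₁ + α₂ - single j 1 ∧ α = β₁ + β₂ - single j 1) := by
    rw [mom_swap β₁, mom_swap β₂, neg_eq_zero, neg_eq_zero]
    tauto
  simp only [swapPairs, bracketTerm, Equiv.prodCongr_apply, Equiv.coe_refl, Prod.map_apply,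
    id, Equiv.prodComm_apply, Prod.swap_prod_mk, if_congr hcond rfl rfl]
  split_ifs
  · rw [hF β₁, hG β₂]
    simp only [map_mul, map_sub, map_natCast]
    ring
  · simp

lemma bracket_conj (hF : ∀ α β, F α β = conj (F β α)) (hG : ∀ α β, G α β = conj (G β α))
    (α β : Idx) : bracket F G α β = conj (bracket F G β α) := by
  have hconj := AddEquivClass.map_finsum (starAddEquiv : ℂ ≃+ ℂ) (bracketTerm F G β α)
  rw [bracket, bracket, ← finsum_comp_equiv swapPairs,
    finsum_congr (bracketTerm_swapPairs hF hG), finsum_neg_distrib, map_mul, Complex.conj_I]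
  simp only [starRingEnd_apply, ← starAddEquiv_apply, hconj]
  ring

end Bracket

/-- the Poisson bracket of two formal Hamiltonians is well
defined — each coefficient is a sum with finitely many nonzero terms — and
the resulting family again belongs to `𝓕`. -/
theorem bracket_well_defined (F G : Coeffs) (hF : InF F) (hG : InF G) :
    (∀ α β : Idx,
        {x : ℤ × (Idx × Idx) × (Idx × Idx) | bracketTerm F G α β x ≠ 0}.Finite) ∧
      InF (bracket F G) := by
  have hlow : ∀ α β : Idx, degree α + degree β ≤ 1 → bracket F G α β = 0 := fun _ _ h =>
    bracket_eq_zero_of_forall_bracketTerm_eq_zero (bracketTerm_eq_zero_of_degree_le_one hF hG h)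
  exact ⟨finite_support_bracketTerm F G, hlow 0 0 (by simp), hlow _ 0 (by simp),
    hlow 0 _ (by simp), bracket_conj hF.2.2.2.1 hG.2.2.2.1,
    fun _ _ h => bracket_eq_zero_of_forall_bracketTerm_eq_zero
      (bracketTerm_eq_zero_of_mom_ne_zero h)⟩
end

section
/- Fix 0 < θ < 1. Let α, β ∈ ℕ^ℤ_f with ∑_i i(α_i − β_i) = 0 and |α| + |β| ≥ 2, and let n̂ = n̂(α+β) = (n̂_1 ≥ n̂_2 ≥ … ≥ n̂_N), N = |α|+|β|, be the decreasing rearrangement associated to α+β. Then ∑_{i∈ℤ} ⟨i⟩^θ (α_i + β_i) = ∑_{l=1}^N n̂_l^θ ≥ 2 n̂_1^θ + (2 − 2^θ) ∑_{l≥3} n̂_l^θ. -/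
open scoped BigOperators ENNReal

/-- `⟨j⟩ = max(|j|,1)` as a real number. -/
def zbr (j : ℤ) : ℝ := ((max j.natAbs 1 : ℕ) : ℝ)

/-- The multiset `n̂(v)`: `⟨h⟩` repeated `v_h` times for each `h ∈ ℤ`. -/
noncomputable def nhat (v : Idx) : Multiset ℕ := v.toMultiset.map fun h => max h.natAbs 1

/-- The decreasing rearrangement `n̂_1 ≥ n̂_2 ≥ … ≥ n̂_N` of `n̂(v)`, as a list
(`n̂_l` is the `(l-1)`-th entry of this list). -/
noncomputable def nhatList (v : Idx) : List ℕ := ((nhat v).sort (· ≤ ·)).reverse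

/-! Momentum conservation `∑ j α_j = ∑ j β_j` bounds every frequency `|h|` by the sum of the
absolute values of the other frequencies, hence `n̂_1 ≤ n̂_2 + ∑_{l ≥ 3} n̂_l`. Concavity of
`t ↦ t^θ` gives `(c + x)^θ ≤ c^θ + (2^θ - 1) x^θ` for `0 ≤ x ≤ c`; adding the `n̂_l`, `l ≥ 3`,
to `n̂_2` one at a time yields `n̂_1^θ ≤ n̂_2^θ + (2^θ - 1) ∑_{l ≥ 3} n̂_l^θ`, which is the
inequality. -/

lemma ConcaveOn.map_add_map_le_of_add_eq {s : Set ℝ} {f : ℝ → ℝ} (hf : ConcaveOn ℝ s f)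
    {a b c d : ℝ} (ha : a ∈ s) (hd : d ∈ s) (hab : a ≤ b) (hbd : b ≤ d)
    (hsum : b + c = a + d) : f a + f d ≤ f b + f c := by
  rcases hab.eq_or_lt with rfl | hab
  · obtain rfl : c = d := by linarith
    rfl
  -- `b` and `c` are the convex combinations of `a` and `d` with the weights `1 - μ`, `μ` swapped.
  set μ := (b - a) / (d - a)
  have hμ : μ * (d - a) = b - a := div_mul_cancel₀ _ (by linarith)
  have hμ0 : 0 ≤ μ := div_nonneg (by linarith) (by linarith)
  have hμ1 : μ ≤ 1 := div_le_one_of_le₀ (by linarith) (by linarith)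
  have hb := hf.2 ha hd (sub_nonneg.2 hμ1) hμ0 (sub_add_cancel 1 μ)
  have hc := hf.2 ha hd hμ0 (sub_nonneg.2 hμ1) (add_sub_cancel μ 1)
  simp only [smul_eq_mul] at hb hc
  rw [show (1 - μ) * a + μ * d = b by linear_combination hμ] at hb
  rw [show μ * a + (1 - μ) * d = c by linear_combination -hsum - hμ] at hc
  linarith

namespace Real

variable {θ : ℝ}

lemma add_rpow_le_rpow_add_mul_rpow (hθ0 : 0 ≤ θ) (hθ1 : θ ≤ 1) {c x : ℝ} (hx : 0 ≤ x)
    (hxc : x ≤ c) : (c + x) ^ θ ≤ c ^ θ + (2 ^ θ - 1) * x ^ θ := by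
  have h := (concaveOn_rpow hθ0 hθ1).map_add_map_le_of_add_eq (c := 2 * x) (d := c + x) hx
    (Set.mem_Ici.2 (by linarith)) hxc (by linarith) (by ring)
  rw [mul_rpow zero_le_two hx] at h
  linarith

lemma add_list_sum_rpow_le (hθ0 : 0 ≤ θ) (hθ1 : θ ≤ 1) {b : ℝ} {r : List ℝ}
    (hr : ∀ x ∈ r, 0 ≤ x ∧ x ≤ b) :
    (b + r.sum) ^ θ ≤ b ^ θ + (2 ^ θ - 1) * (r.map (· ^ θ)).sum := by
  induction r with
  | nil => simp
  | cons x r ih =>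
    simp only [List.forall_mem_cons] at hr
    have hr_sum : 0 ≤ r.sum := List.sum_nonneg fun y hy => (hr.2 y hy).1
    calc (b + (x :: r).sum) ^ θ = (b + r.sum + x) ^ θ := by
          rw [List.sum_cons, add_comm x, ← add_assoc]
      _ ≤ (b + r.sum) ^ θ + (2 ^ θ - 1) * x ^ θ :=
        add_rpow_le_rpow_add_mul_rpow hθ0 hθ1 hr.1.1 (by linarith [hr.1.2])
      _ ≤ b ^ θ + (2 ^ θ - 1) * ((x :: r).map (· ^ θ)).sum := by
        rw [List.map_cons, List.sum_cons]
        linarith [ih hr.2]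

lemma two_mul_rpow_add_le_sum_rpow (hθ0 : 0 ≤ θ) (hθ1 : θ ≤ 1) {a b : ℝ} {r : List ℝ}
    (ha : 0 ≤ a) (hr : ∀ x ∈ r, 0 ≤ x ∧ x ≤ b) (hab : a ≤ b + r.sum) :
    2 * a ^ θ + (2 - 2 ^ θ) * (r.map (· ^ θ)).sum ≤ ((a :: b :: r).map (· ^ θ)).sum := by
  have h := (rpow_le_rpow ha hab hθ0).trans (add_list_sum_rpow_le hθ0 hθ1 hr)
  simp only [List.map_cons, List.sum_cons]
  linarith

end Real

namespace Multiset

lemma natAbs_sum_le (s : Multiset ℤ) : s.sum.natAbs ≤ (s.map Int.natAbs).sum := by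
  induction s using Multiset.induction_on with
  | empty => simp
  | cons a s ih =>
    rw [sum_cons, map_cons, sum_cons]
    exact (Int.natAbs_add_le _ _).trans (Nat.add_le_add_left ih _)

lemma natAbs_le_sum_map_natAbs_erase {s t : Multiset ℤ} (hst : s.sum = t.sum) {h : ℤ}
    (hh : h ∈ s) : h.natAbs ≤ (((s + t).erase h).map Int.natAbs).sum := by
  obtain ⟨s', rfl⟩ := exists_cons_of_mem hh
  rw [sum_cons] at hst
  rw [cons_add, erase_cons_head, map_add, sum_add, add_comm]
  calc h.natAbs = (t.sum - s'.sum).natAbs := by rw [← hst, add_sub_cancel_right]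
    _ ≤ t.sum.natAbs + s'.sum.natAbs := Int.natAbs_sub_le _ _
    _ ≤ _ := add_le_add (natAbs_sum_le t) (natAbs_sum_le s')

lemma max_natAbs_one_le_sum_erase {s t : Multiset ℤ} (hst : s.sum = t.sum)
    (hcard : 2 ≤ card (s + t)) {h : ℤ} (hh : h ∈ s + t) :
    max h.natAbs 1 ≤ (((s + t).erase h).map fun k => max k.natAbs 1).sum := by
  have habs : h.natAbs ≤ (((s + t).erase h).map Int.natAbs).sum := by
    rcases mem_add.1 hh with hs | ht
    · exact natAbs_le_sum_map_natAbs_erase hst hs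
    · rw [add_comm]
      exact natAbs_le_sum_map_natAbs_erase hst.symm ht
  refine max_le (habs.trans (sum_map_le_sum_map _ _ fun k _ => le_max_left _ _)) ?_
  calc 1 ≤ card (((s + t).erase h).map fun k => max k.natAbs 1) • 1 := by
        rw [card_map, card_erase_of_mem hh, Nat.pred_eq_sub_one, smul_eq_mul, mul_one]
        omega
    _ ≤ _ := card_nsmul_le_sum fun _ hk => by
        obtain ⟨k, -, rfl⟩ := mem_map.1 hk
        exact le_max_right _ _

end Multiset

lemma Finsupp.sum_map_toMultiset {ι M : Type*} [AddCommMonoid M] (f : ι →₀ ℕ) (F : ι → M) :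
    (f.toMultiset.map F).sum = f.sum fun i n => n • F i := by
  rw [toMultiset_map, sum_toMultiset, sum_mapDomain_index (h := fun a n => n • a)
    (fun _ => zero_smul ℕ _) fun _ _ _ => add_smul _ _ _]

lemma sum_toMultiset_eq_of_mom_eq_zero {α β : Idx} (h : mom α β = 0) :
    α.toMultiset.sum = β.toMultiset.sum := by
  simp only [Finsupp.sum_toMultiset, nsmul_eq_mul']
  exact sub_eq_zero.1 h

lemma wt_add (α β : Idx) : wt (α + β) = wt α + wt β :=
  Finsupp.sum_add_index' (fun _ => rfl) fun _ _ _ => rfl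

lemma card_toMultiset_eq_wt (v : Idx) : Multiset.card v.toMultiset = wt v :=
  Finsupp.card_toMultiset v

lemma card_nhat (v : Idx) : Multiset.card (nhat v) = wt v := by
  rw [nhat, Multiset.card_map, card_toMultiset_eq_wt]

lemma le_sum_erase_nhat {α β : Idx} (hmom : mom α β = 0) (hN : 2 ≤ wt α + wt β) {a : ℕ}
    (ha : a ∈ nhat (α + β)) : a ≤ ((nhat (α + β)).erase a).sum := by
  obtain ⟨h, hh, rfl⟩ := Multiset.mem_map.1 ha
  rw [nhat, ← Multiset.map_erase_of_mem _ _ hh]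
  rw [Finsupp.toMultiset_add] at hh ⊢
  refine Multiset.max_natAbs_one_le_sum_erase (sum_toMultiset_eq_of_mom_eq_zero hmom) ?_ hh
  rwa [Multiset.card_add, card_toMultiset_eq_wt, card_toMultiset_eq_wt]

lemma finsum_mul_eq_sum_map_nhat {R : Type*} [CommSemiring R] (v : Idx) (F : ℕ → R) :
    ∑ᶠ i : ℤ, F (max i.natAbs 1) * (v i : R) = ((nhat v).map F).sum := by
  rw [nhat, Multiset.map_map, Finsupp.sum_map_toMultiset, Finsupp.sum]
  refine (finsum_eq_sum_of_support_subset _ ?_).trans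
    (Finset.sum_congr rfl fun i _ => (nsmul_eq_mul' _ _).symm)
  rw [← Finsupp.fun_support_eq]
  exact (Function.support_mul_subset_right _ _).trans
    (Function.support_comp_subset Nat.cast_zero _)

lemma coe_nhatList (v : Idx) : (nhatList v : Multiset ℕ) = nhat v := by
  rw [nhatList, Multiset.coe_reverse, Multiset.sort_eq]

lemma sum_map_nhatList {M : Type*} [AddCommMonoid M] (v : Idx) (F : ℕ → M) :
    ((nhatList v).map F).sum = ((nhat v).map F).sum := by
  rw [← coe_nhatList, Multiset.map_coe, Multiset.sum_coe]

lemma length_nhatList (v : Idx) : (nhatList v).length = wt v := by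
  rw [← Multiset.coe_card, coe_nhatList, card_nhat]

lemma pairwise_nhatList (v : Idx) : (nhatList v).Pairwise (· ≥ ·) :=
  List.pairwise_reverse.2 (Multiset.pairwise_sort _ _)

lemma nhatList_head_le_sum_tail {α β : Idx} (hmom : mom α β = 0) (hN : 2 ≤ wt α + wt β)
    {a : ℕ} {t : List ℕ} (hl : nhatList (α + β) = a :: t) : a ≤ t.sum := by
  have ha : a ∈ nhat (α + β) := by
    rw [← coe_nhatList, hl]
    exact List.mem_cons_self
  have h := le_sum_erase_nhat hmom hN ha
  rwa [← coe_nhatList, hl, Multiset.coe_erase, List.erase_cons_head, Multiset.sum_coe] at h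

/-- Lemma `constance generalbis`: under momentum
conservation, `∑_i ⟨i⟩^θ (α_i+β_i) = ∑_l n̂_l^θ ≥ 2 n̂_1^θ + (2−2^θ) ∑_{l≥3}
n̂_l^θ`. -/
theorem gevrey_weight_inequality (θ : ℝ) (hθ0 : 0 < θ) (hθ1 : θ < 1)
    (α β : Idx) (hmom : mom α β = 0) (hN : 2 ≤ wt α + wt β) :
    (∑ᶠ i : ℤ, zbr i ^ θ * ((α i + β i : ℕ) : ℝ)) =
        ((nhatList (α + β)).map fun n => (n : ℝ) ^ θ).sum ∧
      2 * ((nhatList (α + β)).headI : ℝ) ^ θ +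
          (2 - (2 : ℝ) ^ θ) *
            (((nhatList (α + β)).drop 2).map fun n => (n : ℝ) ^ θ).sum ≤
        ((nhatList (α + β)).map fun n => (n : ℝ) ^ θ).sum := by
  -- `(n : ℝ)` in the statement elaborates as the monadic coercion `List ℕ → List ℝ`.
  simp only [bind_pure_comp, List.map_eq_map]
  refine ⟨(finsum_mul_eq_sum_map_nhat (α + β) fun n => (n : ℝ) ^ θ).trans ?_, ?_⟩
  · rw [← sum_map_nhatList, List.map_map]
    rfl
  obtain ⟨a, b, r, hl⟩ : ∃ a b r, nhatList (α + β) = a :: b :: r := by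
    have hlen := length_nhatList (α + β)
    match h : nhatList (α + β) with
    | a :: b :: r => exact ⟨a, b, r, rfl⟩
    | [] | [_] => simp only [h, wt_add, List.length_nil, List.length_singleton] at hlen; omega
  have hsorted := pairwise_nhatList (α + β)
  rw [hl, List.pairwise_cons, List.pairwise_cons] at hsorted
  have hmax := nhatList_head_le_sum_tail hmom hN hl
  rw [hl]
  simp only [List.map_cons, List.headI, List.drop_succ_cons, List.drop_zero]
  refine Real.two_mul_rpow_add_le_sum_rpow hθ0.le hθ1.le (Nat.cast_nonneg a) ?_ ?_
  · simp only [List.forall_mem_map]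
    exact fun n hn => ⟨n.cast_nonneg, Nat.cast_le.2 (hsorted.2.1 n hn)⟩
  · rw [← Nat.cast_list_sum]
    exact_mod_cast hmax
end

section
/- Let g : ℤ → ℝ be nonnegative, even, and nondecreasing on ℕ. Let α ≠ β ∈ ℕ^ℤ_f with α_j ≠ β_j for some j ≠ 0, let m = m(α−β) = (m_1,…,m_D) and n̂ = n̂(α+β) = (n̂_1,…,n̂_N). Then ∑_{i∈ℤ} g(i) |α_i − β_i| ≤ 2 g(m_1) + ∑_{l≥3} g(n̂_l). -/
open scoped BigOperators ENNReal

/-- `α - β` as an integer-valued finitely supported function. -/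
noncomputable def zdiff (α β : Idx) : ℤ →₀ ℤ :=
  (Finsupp.mapRange (fun n : ℕ => (n : ℤ)) rfl α) -
    (Finsupp.mapRange (fun n : ℕ => (n : ℤ)) rfl β)

/-- The multiset `m(u)`: each `j ≠ 0` repeated `|u_j|` times. -/
noncomputable def mMultiset (u : ℤ →₀ ℤ) : Multiset ℤ :=
  (Finsupp.erase 0 (Finsupp.mapRange Int.natAbs Int.natAbs_zero u)).toMultiset

/-- `D = D(u)`, the cardinality of `m(u)`. -/
noncomputable def Dcard (u : ℤ →₀ ℤ) : ℕ := Multiset.card (mMultiset u)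

/-- `|m_1|`: the largest absolute value of an entry of `m(u)` (so that
`m_1 = ± m1abs u`). -/
noncomputable def m1abs (u : ℤ →₀ ℤ) : ℕ := ((mMultiset u).map Int.natAbs).sup

/-!
Write `w i = |α i - β i|`. Since `g i = g |i| ≤ g ⟨i⟩`, the left-hand side is at most the sum of
`g` over the multiset `S` containing `⟨i⟩` with multiplicity `w i`. As `w ≤ α + β`, `S` is a
submultiset of `n̂(α + β) = {n̂_1, n̂_2} + {n̂_3, …}`. The part of `S` lying in `{n̂_1, n̂_2}` has
at most two elements, each at most `|m_1|` (note `⟨0⟩ = 1 ≤ |m_1|` because `m` is nonempty), and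
the rest of `S` lies in `{n̂_3, …}`.
-/

namespace Multiset

variable {ι M : Type*} [AddCommMonoid M] [PartialOrder M] [IsOrderedAddMonoid M]

lemma sum_map_le_sum_map_of_le {f : ι → M} (hf : ∀ x, 0 ≤ f x) {s t : Multiset ι} (h : s ≤ t) :
    (s.map f).sum ≤ (t.map f).sum := by
  obtain ⟨u, rfl⟩ := le_iff_exists_add.1 h
  rw [map_add, sum_add]
  exact le_add_of_nonneg_right <| sum_nonneg fun x hx => by
    obtain ⟨y, -, rfl⟩ := mem_map.1 hx
    exact hf y

lemma sum_map_le_card_nsmul_add_sum_map [DecidableEq ι] {f : ι → M} (hf : ∀ x, 0 ≤ f x)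
    {s p q : Multiset ι} (h : s ≤ p + q) {c : M} (hc0 : 0 ≤ c) (hc : ∀ x ∈ s, f x ≤ c) :
    (s.map f).sum ≤ card p • c + (q.map f).sum := by
  have hinter : ((s ∩ p).map f).sum ≤ card p • c := by
    calc ((s ∩ p).map f).sum ≤ card (s ∩ p) • c := by
          simpa using sum_le_card_nsmul ((s ∩ p).map f) c fun x hx => by
            obtain ⟨y, hy, rfl⟩ := mem_map.1 hx
            exact hc y (mem_of_le inter_le_left hy)
      _ ≤ card p • c := nsmul_le_nsmul_left hc0 (card_le_card inter_le_right)
  calc (s.map f).sum = ((s - p).map f).sum + ((s ∩ p).map f).sum := by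
        rw [← sum_add, ← map_add, sub_add_inter]
    _ ≤ (q.map f).sum + card p • c :=
        add_le_add (sum_map_le_sum_map_of_le hf (Multiset.sub_le_iff_le_add'.2 h)) hinter
    _ = card p • c + (q.map f).sum := add_comm _ _

end Multiset

lemma nhat_eq_take_add_drop (v : Idx) (k : ℕ) :
    nhat v = ((nhatList v).take k : Multiset ℕ) + ((nhatList v).drop k : Multiset ℕ) := by
  rw [Multiset.coe_add, List.take_append_drop, nhatList, Multiset.coe_reverse, Multiset.sort_eq]

noncomputable def absDiff (α β : Idx) : Idx := Finsupp.mapRange Int.natAbs Int.natAbs_zero (zdiff α β)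

lemma absDiff_apply (α β : Idx) (i : ℤ) : absDiff α β i = ((α i : ℤ) - β i).natAbs := by
  simp [absDiff, zdiff]

lemma absDiff_le_add (α β : Idx) : absDiff α β ≤ α + β := fun i => by
  rw [absDiff_apply, Finsupp.add_apply]
  omega

lemma abs_sub_eq_absDiff (α β : Idx) (i : ℤ) : |(α i : ℝ) - β i| = absDiff α β i := by
  rw [absDiff_apply, Nat.cast_natAbs]
  push_cast
  rfl

lemma finsum_mul_abs_sub_eq_sum (g : ℤ → ℝ) (α β : Idx) :
    ∑ᶠ i : ℤ, g i * |(α i : ℝ) - β i| = ((absDiff α β).toMultiset.map g).sum := by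
  classical
  rw [Finset.sum_multiset_map_count (absDiff α β).toMultiset g, Finsupp.toFinset_toMultiset]
  simp only [abs_sub_eq_absDiff, Finsupp.count_toMultiset, nsmul_eq_mul, mul_comm (g _)]
  exact finsum_eq_sum_of_support_subset _ fun i hi => by simp_all

lemma zdiff_ne_zero_iff {α β : Idx} {i : ℤ} : zdiff α β i ≠ 0 ↔ α i ≠ β i := by
  simp [zdiff, sub_eq_zero]

lemma mem_toMultiset_absDiff {α β : Idx} {i : ℤ} : i ∈ (absDiff α β).toMultiset ↔ α i ≠ β i := by
  rw [Finsupp.mem_toMultiset, Finsupp.mem_support_iff, absDiff_apply]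
  omega

lemma natAbs_le_m1abs {u : ℤ →₀ ℤ} {j : ℤ} (hj : j ≠ 0) (huj : u j ≠ 0) : j.natAbs ≤ m1abs u :=
  Multiset.le_sup <| Multiset.mem_map_of_mem _ <| by simpa [mMultiset, hj] using huj

lemma max_natAbs_one_le_m1abs {α β : Idx} (hne : ∃ j : ℤ, j ≠ 0 ∧ α j ≠ β j) {i : ℤ}
    (hi : α i ≠ β i) : max i.natAbs 1 ≤ m1abs (zdiff α β) := by
  obtain ⟨j, hj, hαβ⟩ := hne
  have hone : 1 ≤ m1abs (zdiff α β) :=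
    (Int.natAbs_pos.2 hj).trans_le (natAbs_le_m1abs hj (zdiff_ne_zero_iff.2 hαβ))
  refine max_le ?_ hone
  rcases eq_or_ne i 0 with rfl | hi0
  · simp
  · exact natAbs_le_m1abs hi0 (zdiff_ne_zero_iff.2 hi)

lemma le_of_even_of_monotone {g : ℤ → ℝ} (hgeven : ∀ i, g (-i) = g i)
    (hgmono : ∀ m n : ℕ, m ≤ n → g (m : ℤ) ≤ g (n : ℤ)) (i : ℤ) :
    g i ≤ g ((max i.natAbs 1 : ℕ) : ℤ) := by
  have habs : g i = g (i.natAbs : ℤ) := by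
    rcases Int.natAbs_eq i with h | h
    · rw [← h]
    · rw [h, hgeven, Int.natAbs_neg, Int.natAbs_natCast]
  exact habs ▸ hgmono _ _ (le_max_left _ _)

/-- Lemma `mizza`: for `g` nonnegative, even and
nondecreasing on `ℕ`, and `α ≠ β` differing at some `j ≠ 0`,
`∑_i g(i)|α_i − β_i| ≤ 2 g(m_1) + ∑_{l≥3} g(n̂_l)` (by evenness
`g(m_1) = g(|m_1|)`). -/
theorem weight_sum_estimate (g : ℤ → ℝ) (hg0 : ∀ i, 0 ≤ g i)
    (hgeven : ∀ i, g (-i) = g i)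
    (hgmono : ∀ m n : ℕ, m ≤ n → g (m : ℤ) ≤ g (n : ℤ))
    (α β : Idx) (hne : ∃ j : ℤ, j ≠ 0 ∧ α j ≠ β j) :
    (∑ᶠ i : ℤ, g i * |(α i : ℝ) - (β i : ℝ)|) ≤
      2 * g ((m1abs (zdiff α β) : ℕ) : ℤ) +
        (((nhatList (α + β)).drop 2).map fun n => g ((n : ℕ) : ℤ)).sum := by
  set G : ℕ → ℝ := fun n => g (n : ℤ)
  set M := m1abs (zdiff α β)
  set t := nhatList (α + β)
  set S : Multiset ℕ := (absDiff α β).toMultiset.map fun i => max i.natAbs 1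
  have hS : S ≤ (t.take 2 : Multiset ℕ) + (t.drop 2 : Multiset ℕ) :=
    nhat_eq_take_add_drop (α + β) 2 ▸ Multiset.map_le_map
      (Finsupp.toMultiset_strictMono.monotone (absDiff_le_add α β))
  have hSM : ∀ n ∈ S, G n ≤ G M := fun n hn => by
    obtain ⟨i, hi, rfl⟩ := Multiset.mem_map.1 hn
    exact hgmono _ _ (max_natAbs_one_le_m1abs hne (mem_toMultiset_absDiff.1 hi))
  calc (∑ᶠ i : ℤ, g i * |(α i : ℝ) - (β i : ℝ)|) = ((absDiff α β).toMultiset.map g).sum :=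
        finsum_mul_abs_sub_eq_sum g α β
    _ ≤ (S.map G).sum := by
        rw [Multiset.map_map]
        exact Multiset.sum_map_le_sum_map _ _ fun i _ => le_of_even_of_monotone hgeven hgmono i
    _ ≤ (t.take 2).length • G M + ((t.drop 2).map G).sum :=
        Multiset.sum_map_le_card_nsmul_add_sum_map (f := G) (fun n => hg0 n) hS (hg0 _) hSM
    _ ≤ 2 * G M + ((t.drop 2).map G).sum := by
        rw [nsmul_eq_mul]
        gcongr
        · exact hg0 _
        · exact_mod_cast List.length_take_le _ _
end

section
/- Fix 0 < θ < 1 and 0 < σ ≤ 1, set C_* := 7/(2 − 2^θ), define f_i(x) := −(σ/C_*) x ⟨i⟩^{θ/2} + ln(1 + x² ⟨i⟩²) for i ∈ ℤ and x ≥ 0, and set i_♯ := ( (24 C_*/(σθ)) ln(12 C_*/(σθ)) )^{2/θ}. Then for every finitely supported ℓ : ℤ → ℤ one has ∑_{i∈ℤ} f_i(|ℓ_i|) ≤ 18 i_♯ ln i_♯. -/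
open scoped BigOperators ENNReal

/-!
With `ε = σ / C_*` and `D = 12 / (ε θ)` one has `i_♯ = (2 D log D) ^ (2 / θ)`. Only indices with
`ℓ_i ≠ 0` contribute. Since `u ≥ 2 D log D` forces `D log u ≤ u`, for `⟨i⟩ ≥ i_♯` the linear term
`ε |ℓ_i| ⟨i⟩^(θ/2)` beats `log (1 + ℓ_i² ⟨i⟩²)`, so those terms are nonpositive. For `⟨i⟩ ≤ i_♯`,
bounding the logarithm by a tangent line gives `f_i(|ℓ_i|) ≤ 2 log (2 ⟨i⟩ / ε) ≤ 4 log i_♯`, and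
there are at most `2 i_♯ + 1 ≤ 3 i_♯` such indices.
-/

open Real Finset

lemma one_le_zbr (j : ℤ) : 1 ≤ zbr j := by
  unfold zbr
  exact_mod_cast le_max_right j.natAbs 1

lemma natAbs_le_zbr (j : ℤ) : (j.natAbs : ℝ) ≤ zbr j := by
  unfold zbr
  exact_mod_cast le_max_left j.natAbs 1

lemma card_filter_zbr_le (s : Finset ℤ) {I : ℝ} (hI : 1 ≤ I) :
    (#{i ∈ s | zbr i ≤ I} : ℝ) ≤ 3 * I := by
  set N := ⌊I⌋₊
  have hsub : {i ∈ s | zbr i ≤ I} ⊆ Icc (-(N : ℤ)) N := by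
    intro i hi
    have hiN : i.natAbs ≤ N := Nat.le_floor ((natAbs_le_zbr i).trans (mem_filter.1 hi).2)
    rw [mem_Icc]
    omega
  have hcard : #{i ∈ s | zbr i ≤ I} ≤ 2 * N + 1 := by
    have := card_le_card hsub
    rw [Int.card_Icc] at this
    omega
  calc (#{i ∈ s | zbr i ≤ I} : ℝ) ≤ 2 * N + 1 := by exact_mod_cast hcard
    _ ≤ 2 * I + 1 := by gcongr; exact Nat.floor_le (by linarith)
    _ ≤ 3 * I := by linarith

lemma Finset.sum_le_card_filter_nsmul {ι M : Type*} [AddCommMonoid M] [PartialOrder M]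
    [IsOrderedAddMonoid M] (s : Finset ι) (p : ι → Prop) [DecidablePred p] {f : ι → M} {m : M}
    (hp : ∀ i ∈ s, p i → f i ≤ m) (hnp : ∀ i ∈ s, ¬ p i → f i ≤ 0) :
    ∑ i ∈ s, f i ≤ #{i ∈ s | p i} • m := by
  rw [← sum_filter_add_sum_filter_not s p, ← add_zero (_ • m)]
  refine add_le_add (sum_le_card_nsmul _ _ _ fun i hi => ?_) (sum_nonpos fun i hi => ?_)
  · exact hp i (mem_filter.1 hi).1 (mem_filter.1 hi).2
  · exact hnp i (mem_filter.1 hi).1 (mem_filter.1 hi).2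

lemma log_le_log_add_div_sub_one {c t : ℝ} (hc : 0 < c) (ht : 0 < t) :
    log t ≤ log c + t / c - 1 := by
  have := log_le_sub_one_of_pos (div_pos ht hc)
  rw [log_div ht.ne' hc.ne'] at this
  linarith

lemma mul_log_le_of_two_mul_mul_log_le {A u : ℝ} (hA : 0 < A) (hu : 0 < u)
    (h : 2 * A * log A ≤ u) : A * log u ≤ u := by
  have hlog := log_le_log_add_div_sub_one (mul_pos two_pos hA) hu
  rw [log_mul two_ne_zero hA.ne'] at hlog
  have hmul := mul_le_mul_of_nonneg_left hlog hA.le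
  have hAu : A * (u / (2 * A)) = u / 2 := by field_simp
  nlinarith [log_two_lt_d9]

lemma log_one_add_sq_le_two_mul_log {y : ℝ} (hy : 0 ≤ y) :
    log (1 + y ^ 2) ≤ 2 * log (1 + y) := by
  calc log (1 + y ^ 2) ≤ log ((1 + y) ^ 2) := log_le_log (by positivity) (by nlinarith)
    _ = 2 * log (1 + y) := by rw [log_pow]; norm_num

lemma neg_mul_add_log_le_two_mul_log {a x z : ℝ} (ha : 0 < a) (haz : a ≤ z) (hx : 0 ≤ x) :
    -(a * x) + log (1 + x ^ 2 * z ^ 2) ≤ 2 * log (2 * z / a) := by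
  have hz : 0 < z := ha.trans_le haz
  have hsq := log_one_add_sq_le_two_mul_log (mul_nonneg hx hz.le)
  have hlog := log_le_log_add_div_sub_one (c := 2 * z / a) (by positivity)
    (by positivity : 0 < 1 + x * z)
  have hsplit : (1 + x * z) / (2 * z / a) = a / (2 * z) + a * x / 2 := by field_simp
  have haz' : a / (2 * z) ≤ 1 / 2 := by rw [div_le_iff₀ (by positivity)]; linarith
  rw [mul_pow] at hsq
  linarith

lemma neg_mul_add_log_nonpos {a x z : ℝ} (hz : 1 ≤ z) (hx : 1 ≤ x)
    (ha : 2 + 2 * log (2 * z) ≤ a) : -(a * x) + log (1 + x ^ 2 * z ^ 2) ≤ 0 := by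
  have hxz : 1 ≤ x * z := one_le_mul_of_one_le_of_one_le hx hz
  have hlog : log (1 + x ^ 2 * z ^ 2) ≤ 2 * log (2 * z) + 2 * log x := by
    calc log (1 + x ^ 2 * z ^ 2) ≤ log ((2 * z) ^ 2 * x ^ 2) :=
          log_le_log (by positivity) (by nlinarith)
      _ = 2 * log (2 * z) + 2 * log x := by
          rw [log_mul (by positivity) (by positivity), log_pow, log_pow]; norm_num
  have hlogx : log x ≤ x - 1 := log_le_sub_one_of_pos (by linarith)
  have hlogz : 0 ≤ log (2 * z) := log_nonneg (by linarith)
  nlinarith [mul_nonneg (by linarith : 0 ≤ a - 2) (by linarith : 0 ≤ x - 1)]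

lemma neg_mul_mul_rpow_add_log_le {ε s x z : ℝ} (hε0 : 0 < ε) (hε1 : ε ≤ 1) (hs0 : 0 ≤ s)
    (hs1 : s ≤ 1) (hz : 1 ≤ z) (hx : 0 ≤ x) :
    -ε * x * z ^ s + log (1 + x ^ 2 * z ^ 2) ≤ 2 * log (2 * z / ε) := by
  have hzs : 1 ≤ z ^ s := one_le_rpow hz hs0
  have hεa : ε ≤ ε * z ^ s := le_mul_of_one_le_right hε0.le hzs
  have haz : ε * z ^ s ≤ z :=
    (mul_le_of_le_one_left (by linarith) hε1).trans (rpow_le_self_of_one_le hz hs1)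
  calc -ε * x * z ^ s + log (1 + x ^ 2 * z ^ 2)
      = -(ε * z ^ s * x) + log (1 + x ^ 2 * z ^ 2) := by ring
    _ ≤ 2 * log (2 * z / (ε * z ^ s)) :=
      neg_mul_add_log_le_two_mul_log (hε0.trans_le hεa) haz hx
    _ ≤ 2 * log (2 * z / ε) := by gcongr

lemma two_add_two_mul_log_le_mul_rpow {ε θ w : ℝ} (hε : 0 < ε) (hθ0 : 0 < θ) (hθ1 : θ ≤ 1)
    (hD : 1 ≤ log (12 / (ε * θ)))
    (hw : (24 / (ε * θ) * log (12 / (ε * θ))) ^ (2 / θ) ≤ w) :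
    2 + 2 * log (2 * w) ≤ ε * w ^ (θ / 2) := by
  set D := 12 / (ε * θ)
  set B := 24 / (ε * θ) * log D
  have hεθ : 0 < ε * θ := mul_pos hε hθ0
  have hεθD : ε * θ * D = 12 := by simp only [D]; field_simp
  have hεθB : ε * θ * B = 24 * log D := by simp only [B]; field_simp
  have hB0 : 0 < B := mul_pos (by positivity) (by linarith)
  have hw0 : 0 < w := (rpow_pos_of_pos hB0 _).trans_le hw
  set u := w ^ (θ / 2)
  have hBu : B ≤ u := by
    calc B = (B ^ (2 / θ)) ^ (θ / 2) := by
          rw [← rpow_mul hB0.le, div_mul_div_comm, mul_comm, div_self (by positivity), rpow_one]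
      _ ≤ u := rpow_le_rpow (by positivity) hw (by positivity)
  have hu0 : 0 < u := hB0.trans_le hBu
  have hBD : B = 2 * D * log D := by simp only [B, D]; ring
  have hDlog : D * log u ≤ u := mul_log_le_of_two_mul_mul_log_le (by positivity) hu0 (hBD ▸ hBu)
  have h12 : 12 * log u ≤ ε * θ * u := by
    have := mul_le_mul_of_nonneg_left hDlog hεθ.le
    rwa [← mul_assoc, hεθD] at this
  have h24 : 24 ≤ ε * θ * u := by nlinarith [mul_le_mul_of_nonneg_left hBu hεθ.le]
  have hlogu : θ * log w = 2 * log u := by rw [log_rpow hw0]; ring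
  have hθlog2 : θ * log 2 ≤ 1 := by nlinarith [log_two_lt_d9, log_nonneg one_le_two]
  refine le_of_mul_le_mul_left ?_ hθ0
  rw [log_mul two_ne_zero hw0.ne']
  nlinarith

theorem finsum_neg_mul_rpow_add_log_le {ε θ : ℝ} (hε0 : 0 < ε) (hε1 : ε ≤ 1) (hθ0 : 0 < θ)
    (hθ1 : θ ≤ 1) (ℓ : ℤ →₀ ℤ) :
    ∑ᶠ i : ℤ, (-ε * |(ℓ i : ℝ)| * zbr i ^ (θ / 2) + log (1 + |(ℓ i : ℝ)| ^ 2 * zbr i ^ 2)) ≤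
      18 * (24 / (ε * θ) * log (12 / (ε * θ))) ^ (2 / θ) *
        log ((24 / (ε * θ) * log (12 / (ε * θ))) ^ (2 / θ)) := by
  set I := (24 / (ε * θ) * log (12 / (ε * θ))) ^ (2 / θ)
  have hεθ : 0 < ε * θ := mul_pos hε0 hθ0
  have hD : 1 ≤ log (12 / (ε * θ)) := by
    rw [le_log_iff_exp_le (by positivity)]
    have h12 : 12 ≤ 12 / (ε * θ) := by
      rw [le_div_iff₀ hεθ]; nlinarith [mul_le_one₀ hε1 hθ0.le hθ1]
    linarith [exp_one_lt_d9]
  have h2εI : 2 / ε ≤ I := by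
    have h24 : 2 / ε ≤ 24 / (ε * θ) := by
      rw [div_le_div_iff₀ hε0 hεθ]; nlinarith
    have hB : 2 / ε ≤ 24 / (ε * θ) * log (12 / (ε * θ)) :=
      h24.trans (le_mul_of_one_le_right (by positivity) hD)
    exact hB.trans (self_le_rpow_of_one_le (((one_le_div hε0).2 (by linarith)).trans hB)
      (by rw [le_div_iff₀ hθ0]; linarith))
  have hI1 : 1 ≤ I := ((one_le_div hε0).2 (by linarith)).trans h2εI
  rw [finsum_eq_finsetSum_of_support_subset _ (s := ℓ.support) fun i hi => by
    contrapose! hi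
    simp [Finsupp.notMem_support_iff.1 hi]]
  calc _ ≤ #{i ∈ ℓ.support | zbr i ≤ I} • (4 * log I) := by
        refine sum_le_card_filter_nsmul _ _ (fun i _ hiI => ?_) (fun i hi hiI => ?_)
        · calc _ ≤ 2 * log (2 * zbr i / ε) :=
                neg_mul_mul_rpow_add_log_le hε0 hε1 (by positivity) (by linarith) (one_le_zbr i)
                  (abs_nonneg _)
            _ ≤ 2 * log (I * I) := by
                have hz := one_le_zbr i
                rw [mul_div_right_comm]
                gcongr
            _ = 4 * log I := by rw [log_mul (by positivity) (by positivity)]; ring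
        · have hx : 1 ≤ |(ℓ i : ℝ)| := by
            exact_mod_cast Int.one_le_abs (Finsupp.mem_support_iff.1 hi)
          calc _ = -(ε * zbr i ^ (θ / 2) * |(ℓ i : ℝ)|) +
                log (1 + |(ℓ i : ℝ)| ^ 2 * zbr i ^ 2) := by ring
            _ ≤ 0 := neg_mul_add_log_nonpos (one_le_zbr i) hx
                (two_add_two_mul_log_le_mul_rpow hε0 hθ0 hθ1 hD (not_le.1 hiI).le)
    _ ≤ 3 * I * (4 * log I) := by
        rw [nsmul_eq_mul]
        gcongr
        · exact mul_nonneg zero_le_four (log_nonneg hI1)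
        · exact card_filter_zbr_le _ hI1
    _ ≤ 18 * I * log I := by nlinarith [log_nonneg hI1]

/-- Lemma `pajata`: with `C_* = 7/(2−2^θ)`,
`f_i(x) = −(σ/C_*) x ⟨i⟩^{θ/2} + ln(1+x²⟨i⟩²)` and
`i_♯ = ((24C_*/(σθ)) ln(12C_*/(σθ)))^{2/θ}`, for every finitely supported
`ℓ : ℤ → ℤ` one has `∑_i f_i(|ℓ_i|) ≤ 18 i_♯ ln i_♯`. -/
theorem small_divisor_counting (θ σ : ℝ) (hθ0 : 0 < θ) (hθ1 : θ < 1)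
    (hσ0 : 0 < σ) (hσ1 : σ ≤ 1) (ℓ : ℤ →₀ ℤ) :
    (∑ᶠ i : ℤ,
        (-(σ / (7 / (2 - (2 : ℝ) ^ θ))) * |(ℓ i : ℝ)| * zbr i ^ (θ / 2) +
          Real.log (1 + |(ℓ i : ℝ)| ^ 2 * zbr i ^ 2))) ≤
      18 * (((24 * (7 / (2 - (2 : ℝ) ^ θ)) / (σ * θ)) *
          Real.log (12 * (7 / (2 - (2 : ℝ) ^ θ)) / (σ * θ))) ^ (2 / θ)) *
        Real.log (((24 * (7 / (2 - (2 : ℝ) ^ θ)) / (σ * θ)) *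
          Real.log (12 * (7 / (2 - (2 : ℝ) ^ θ)) / (σ * θ))) ^ (2 / θ)) := by
  have h2θ : (2 : ℝ) ^ θ < 2 := by
    simpa using rpow_lt_rpow_of_exponent_lt one_lt_two hθ1
  have hgap : 0 < 2 - (2 : ℝ) ^ θ := by linarith
  have hε1 : σ / (7 / (2 - (2 : ℝ) ^ θ)) ≤ 1 := by
    rw [div_le_one (by positivity), le_div_iff₀ hgap]
    nlinarith [rpow_pos_of_pos two_pos θ]
  have hconst : ∀ c : ℝ, c * (7 / (2 - (2 : ℝ) ^ θ)) / (σ * θ) =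
      c / (σ / (7 / (2 - (2 : ℝ) ^ θ)) * θ) := fun c => by field_simp
  simpa only [hconst] using
    finsum_neg_mul_rpow_add_log_le (by positivity) hε1 hθ0 hθ1.le ℓ
end
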